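/- The pushout, in the category of topological spaces, of two copies of the closed unit disk D² along the inclusion of their common boundary circle S¹ (i.e., the double of D² along its boundary) is homeomorphic to the 2-sphere S². -/

import Mathlib

/-!
Let `S` be the unit sphere of `E × ℝ` with the `L²` norm. The maps `x ↦ (x, ±√(1 - ‖x‖²))` are
closed embeddings of the closed unit ball of `E` onto the two closed hemispheres of `S` (the
projection `(x, t) ↦ x` is a continuous left inverse); their images cover `S` and meet exactly in
the image of the unit sphere of `E`. A space that is the union of two closed embedded pieces is the
pushout of the pieces along their intersection, since a map that is continuous on each of two
closed sets is continuous on their union. So the double of the unit ball of `E` is `S`, and for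
`E = ℝ²` the sphere `S` is isometric to `S²`.
-/

open CategoryTheory Limits Metric

/-- The inclusion of the boundary circle `S¹` into the closed unit disk `D²`,
as a morphism in `TopCat`. -/
noncomputable def boundaryCircleIncl :
    TopCat.of (sphere (0 : EuclideanSpace ℝ (Fin 2)) 1) ⟶
      TopCat.of (closedBall (0 : EuclideanSpace ℝ (Fin 2)) 1) :=
  TopCat.ofHom ⟨Set.inclusion sphere_subset_closedBall, continuous_inclusion _⟩

open Topology Set

noncomputable section

theorem continuous_of_isClosedEmbedding_cover {X Y Z W : Type*} [TopologicalSpace X]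
    [TopologicalSpace Y] [TopologicalSpace Z] [TopologicalSpace W] {i : X → Z} {j : Y → Z}
    (hi : IsClosedEmbedding i) (hj : IsClosedEmbedding j) (hcover : range i ∪ range j = univ)
    {g : Z → W} (hgi : Continuous (g ∘ i)) (hgj : Continuous (g ∘ j)) : Continuous g := by
  rw [← continuousOn_univ, ← hcover, ← image_univ, ← image_univ]
  exact ContinuousOn.union_of_isClosed
    (hi.isInducing.continuousOn_image_iff.2 hgi.continuousOn)
    (hj.isInducing.continuousOn_image_iff.2 hgj.continuousOn)
    (image_univ ▸ hi.isClosed_range) (image_univ ▸ hj.isClosed_range)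

namespace TopCat

section ClosedCover

variable {A B C : TopCat} {f : C ⟶ A} {g : C ⟶ B} (s : PushoutCocone f g)
  (hl : IsClosedEmbedding s.inl) (hr : IsClosedEmbedding s.inr)
  (hcover : range s.inl ∪ range s.inr = univ)
  (hglue : ∀ a b, s.inl a = s.inr b → ∃ c, f c = a ∧ g c = b)

open Classical in
def descOfClosedCover (t : PushoutCocone f g) (y : s.pt) : t.pt :=
  if h : y ∈ range s.inl then t.inl h.choose
  else t.inr ((hcover.symm ▸ mem_univ y).resolve_left h).choose

include hl in
lemma descOfClosedCover_inl (t : PushoutCocone f g) (a : A) :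
    descOfClosedCover s hcover t (s.inl a) = t.inl a := by
  have h : s.inl a ∈ range s.inl := mem_range_self a
  rw [descOfClosedCover, dif_pos h, hl.injective h.choose_spec]

include hr hglue in
lemma descOfClosedCover_inr (t : PushoutCocone f g) (b : B) :
    descOfClosedCover s hcover t (s.inr b) = t.inr b := by
  rw [descOfClosedCover]
  split_ifs with h
  · obtain ⟨c, hca, rfl⟩ := hglue _ b h.choose_spec
    rw [← hca]
    exact ConcreteCategory.congr_hom t.condition c
  · exact congrArg t.inr (hr.injective ((hcover.symm ▸ mem_univ _).resolve_left h).choose_spec)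

include hl hr hglue in
def descHomOfClosedCover (t : PushoutCocone f g) : s.pt ⟶ t.pt :=
  ofHom ⟨descOfClosedCover s hcover t, continuous_of_isClosedEmbedding_cover hl hr hcover
    (by simpa [Function.comp_def, descOfClosedCover_inl s hl hcover] using t.inl.hom.continuous)
    (by simpa [Function.comp_def, descOfClosedCover_inr s hr hcover hglue]
      using t.inr.hom.continuous)⟩

include hl hr hglue in
def isColimitOfClosedCover : IsColimit s :=
  PushoutCocone.isColimitAux' s fun t ↦
    ⟨descHomOfClosedCover s hl hr hcover hglue t,
      by ext a; exact descOfClosedCover_inl s hl hcover t a,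
      by ext b; exact descOfClosedCover_inr s hr hcover hglue t b,
      fun {m} hml hmr ↦ by
        ext y
        obtain ⟨a, rfl⟩ | ⟨b, rfl⟩ := hcover.symm ▸ mem_univ y
        · exact (ConcreteCategory.congr_hom hml a).trans
            (descOfClosedCover_inl s hl hcover t a).symm
        · exact (ConcreteCategory.congr_hom hmr b).trans
            (descOfClosedCover_inr s hr hcover hglue t b).symm⟩

end ClosedCover

end TopCat

namespace DoubleClosedBall

variable {E : Type*} [NormedAddCommGroup E]

def hemisphere (ε : ℝ) (x : E) : WithLp 2 (E × ℝ) :=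
  WithLp.toLp 2 (x, ε * √(1 - ‖x‖ ^ 2))

@[fun_prop]
lemma continuous_hemisphere (ε : ℝ) : Continuous (hemisphere (E := E) ε) := by
  unfold hemisphere; fun_prop

lemma norm_hemisphere {ε : ℝ} (hε : ε ^ 2 = 1) {x : E} (hx : ‖x‖ ≤ 1) :
    ‖hemisphere ε x‖ = 1 := by
  have h : 0 ≤ 1 - ‖x‖ ^ 2 := by nlinarith [norm_nonneg x]
  rw [← pow_eq_one_iff_of_nonneg (norm_nonneg _) two_ne_zero, WithLp.prod_norm_sq_eq_of_L2]
  simp [hemisphere, mul_pow, hε, Real.sq_sqrt h]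

lemma fst_mem_closedBall (y : sphere (0 : WithLp 2 (E × ℝ)) 1) :
    y.1.fst ∈ closedBall (0 : E) 1 :=
  mem_closedBall_zero_iff.2 ((WithLp.norm_fst_le (x := y.1)).trans (norm_eq_of_mem_sphere y).le)

lemma hemisphere_fst {ε : ℝ} (hε : ε ^ 2 = 1) {y : WithLp 2 (E × ℝ)} (hy : ‖y‖ = 1)
    (hsgn : 0 ≤ ε * y.snd) : hemisphere ε y.fst = y := by
  have hsnd : 1 - ‖y.fst‖ ^ 2 = (ε * y.snd) ^ 2 := by
    have := WithLp.prod_norm_sq_eq_of_L2 y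
    rw [hy, Real.norm_eq_abs, sq_abs] at this
    rw [mul_pow, hε, one_mul]
    linarith
  refine WithLp.ofLp_injective 2 (Prod.ext rfl ?_)
  simp only [hemisphere, hsnd, Real.sqrt_sq hsgn, ← mul_assoc, ← sq, hε, one_mul]
  rfl

lemma hemisphere_of_norm_eq_one (ε : ℝ) {x : E} (hx : ‖x‖ = 1) :
    hemisphere ε x = WithLp.toLp 2 (x, 0) := by
  simp [hemisphere, hx]

lemma eq_and_norm_eq_one_of_hemisphere_eq {x y : E} (h : hemisphere 1 x = hemisphere (-1) y)
    (hx : ‖x‖ ≤ 1) : x = y ∧ ‖x‖ = 1 := by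
  obtain rfl : x = y := congrArg (fun z : WithLp 2 (E × ℝ) ↦ z.fst) h
  have h2 : √(1 - ‖x‖ ^ 2) = -√(1 - ‖x‖ ^ 2) := by
    simpa [hemisphere] using congrArg (fun z : WithLp 2 (E × ℝ) ↦ z.snd) h
  have : √(1 - ‖x‖ ^ 2) = 0 := by linarith
  rw [Real.sqrt_eq_zero'] at this
  exact ⟨rfl, le_antisymm hx (by nlinarith [norm_nonneg x])⟩

variable (E)

def sphereInclusion : TopCat.of (sphere (0 : E) 1) ⟶ TopCat.of (closedBall (0 : E) 1) :=
  TopCat.ofHom ⟨Set.inclusion sphere_subset_closedBall, continuous_inclusion _⟩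

def hemisphereHom (ε : ℝ) (hε : ε ^ 2 = 1) :
    TopCat.of (closedBall (0 : E) 1) ⟶ TopCat.of (sphere (0 : WithLp 2 (E × ℝ)) 1) :=
  TopCat.ofHom ⟨fun x ↦ ⟨hemisphere ε x.1, mem_sphere_zero_iff_norm.2
    (norm_hemisphere hε (mem_closedBall_zero_iff.1 x.2))⟩, by fun_prop⟩

lemma isClosedEmbedding_hemisphereHom (ε : ℝ) (hε : ε ^ 2 = 1) :
    IsClosedEmbedding (hemisphereHom E ε hε) :=
  Function.LeftInverse.isClosedEmbedding
    (f := fun y ↦ ⟨y.1.fst, fst_mem_closedBall y⟩)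
    (fun _ ↦ rfl) (by fun_prop) (hemisphereHom E ε hε).hom.continuous

lemma sphereInclusion_comp_hemisphereHom :
    sphereInclusion E ≫ hemisphereHom E 1 (one_pow 2) =
      sphereInclusion E ≫ hemisphereHom E (-1) neg_one_sq := by
  ext x
  simp [sphereInclusion, hemisphereHom, hemisphere_of_norm_eq_one _ (norm_eq_of_mem_sphere x)]

def doubleCocone : PushoutCocone (sphereInclusion E) (sphereInclusion E) :=
  PushoutCocone.mk _ _ (sphereInclusion_comp_hemisphereHom E)

lemma exists_sphere_of_hemisphereHom_eq {a b : closedBall (0 : E) 1}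
    (h : hemisphereHom E 1 (one_pow 2) a = hemisphereHom E (-1) neg_one_sq b) :
    ∃ c, sphereInclusion E c = a ∧ sphereInclusion E c = b := by
  obtain ⟨hab, ha⟩ := eq_and_norm_eq_one_of_hemisphere_eq (congrArg Subtype.val h)
    (mem_closedBall_zero_iff.1 a.2)
  exact ⟨⟨a, mem_sphere_zero_iff_norm.2 ha⟩, rfl, Subtype.ext hab⟩

lemma range_hemisphereHom_union_range :
    range (hemisphereHom E 1 (one_pow 2)) ∪ range (hemisphereHom E (-1) neg_one_sq) = univ := by
  refine eq_univ_of_forall fun y ↦ ?_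
  have hy := norm_eq_of_mem_sphere y
  rcases le_total 0 y.1.snd with hsnd | hsnd
  · exact .inl ⟨⟨_, fst_mem_closedBall y⟩,
      Subtype.ext (hemisphere_fst (one_pow 2) hy (by simpa using hsnd))⟩
  · exact .inr ⟨⟨_, fst_mem_closedBall y⟩,
      Subtype.ext (hemisphere_fst neg_one_sq hy (by simpa using hsnd))⟩

def isColimitDoubleCocone : IsColimit (doubleCocone E) :=
  TopCat.isColimitOfClosedCover _ (isClosedEmbedding_hemisphereHom E 1 (one_pow 2))
    (isClosedEmbedding_hemisphereHom E (-1) neg_one_sq) (range_hemisphereHom_union_range E)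
    fun _ _ ↦ exists_sphere_of_hemisphereHom_eq E

def pushoutHomeomorphSphere :
    (pushout (sphereInclusion E) (sphereInclusion E) : TopCat) ≃ₜ
      sphere (0 : WithLp 2 (E × ℝ)) 1 :=
  TopCat.homeoOfIso (colimit.isoColimitCocone ⟨_, isColimitDoubleCocone E⟩)

end DoubleClosedBall

end

/-- The double of the closed 2-disk along its boundary circle, i.e. the pushout in `TopCat`
of two copies of the boundary inclusion `S¹ ↪ D²`, is homeomorphic to the 2-sphere `S²`. -/
theorem double_of_disk_homeomorphic_sphere :
    Nonempty ((pushout boundaryCircleIncl boundaryCircleIncl : TopCat) ≃ₜ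
      sphere (0 : EuclideanSpace ℝ (Fin 3)) 1) :=
  let e : WithLp 2 (EuclideanSpace ℝ (Fin 2) × ℝ) ≃ₗᵢ[ℝ] EuclideanSpace ℝ (Fin 3) :=
    ((EuclideanSpace.basisFun (Fin 2) ℝ).prod (OrthonormalBasis.singleton (Fin 1) ℝ)).equiv
      (EuclideanSpace.basisFun (Fin 3) ℝ) finSumFinEquiv
  ⟨(DoubleClosedBall.pushoutHomeomorphSphere _).trans (e.toHomeomorph.subtype fun _ ↦ by simp)⟩
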